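/- arXiv:2208.09194 — 4 statements merged into one kernel-verified Lean document; each statement's English description precedes it below -/
import Mathlib

section
/- There exists a constant $c > 0$ such that for all real $x > 0$ and $\lambda \in (0,1)$, $\left| \frac{\lambda x}{\sqrt{1+\lambda^2 x^2}} - \frac{x}{\sqrt{1+x^2}} \right| \geq c \,\frac{x}{\sqrt{1+x^2}\,(1+\lambda^2 x^2)}\,(1 - \lambda^2)$. -/
/-!
Write `a = √(1 + x²)` and `b = √(1 + λ²x²)`. Since `(b - λa)(b + λa) = b² - λ²a² = 1 - λ²`,
the difference `x / a - λx / b = x (b - λa) / (ab)` equals `x (1 - λ²) / (ab (b + λa))`,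
and `λa ≤ b` bounds the denominator by `2ab² = 2a(1 + λ²x²)`. This gives `c = 1/2`.
-/

open Real

lemma mul_sqrt_one_add_sq_le_sqrt {lam : ℝ} (hlam : lam ^ 2 ≤ 1) (x : ℝ) :
    lam * √(1 + x ^ 2) ≤ √(1 + lam ^ 2 * x ^ 2) :=
  calc lam * √(1 + x ^ 2) ≤ |lam| * √(1 + x ^ 2) := by gcongr; exact le_abs_self lam
    _ = √(lam ^ 2 * (1 + x ^ 2)) := by rw [sqrt_mul (sq_nonneg lam), sqrt_sq_eq_abs]
    _ ≤ √(1 + lam ^ 2 * x ^ 2) := sqrt_le_sqrt (by nlinarith)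

lemma div_sqrt_one_add_sq_sub_div_sqrt_one_add_sq {lam : ℝ} (hlam : 0 ≤ lam) (x : ℝ) :
    x / √(1 + x ^ 2) - lam * x / √(1 + lam ^ 2 * x ^ 2) =
      x * (1 - lam ^ 2) /
        (√(1 + x ^ 2) * √(1 + lam ^ 2 * x ^ 2) * (√(1 + lam ^ 2 * x ^ 2) + lam * √(1 + x ^ 2))) := by
  have ha2 : √(1 + x ^ 2) ^ 2 = 1 + x ^ 2 := sq_sqrt (by positivity)
  have hb2 : √(1 + lam ^ 2 * x ^ 2) ^ 2 = 1 + lam ^ 2 * x ^ 2 := sq_sqrt (by positivity)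
  have ha : 0 < √(1 + x ^ 2) := sqrt_pos.2 (by positivity)
  have hb : 0 < √(1 + lam ^ 2 * x ^ 2) := sqrt_pos.2 (by positivity)
  generalize √(1 + x ^ 2) = a at *
  generalize √(1 + lam ^ 2 * x ^ 2) = b at *
  have hsum : 0 < b + lam * a := by positivity
  field_simp
  linear_combination x * hb2 - lam ^ 2 * x * ha2

lemma div_sqrt_one_add_sq_sub_div_sqrt_one_add_sq_ge {x lam : ℝ} (hx : 0 ≤ x) (hlam₀ : 0 ≤ lam)
    (hlam₁ : lam ≤ 1) :
    x / (√(1 + x ^ 2) * (1 + lam ^ 2 * x ^ 2)) * (1 - lam ^ 2) / 2 ≤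
      x / √(1 + x ^ 2) - lam * x / √(1 + lam ^ 2 * x ^ 2) := by
  have hb2 : √(1 + lam ^ 2 * x ^ 2) ^ 2 = 1 + lam ^ 2 * x ^ 2 := sq_sqrt (by positivity)
  have hlab := mul_sqrt_one_add_sq_le_sqrt (by nlinarith : lam ^ 2 ≤ 1) x
  rw [div_mul_eq_mul_div, div_div, div_sqrt_one_add_sq_sub_div_sqrt_one_add_sq hlam₀]
  apply div_le_div_of_nonneg_left (mul_nonneg hx (by nlinarith)) (by positivity)
  calc √(1 + x ^ 2) * √(1 + lam ^ 2 * x ^ 2) * (√(1 + lam ^ 2 * x ^ 2) + lam * √(1 + x ^ 2))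
      ≤ √(1 + x ^ 2) * √(1 + lam ^ 2 * x ^ 2) * (2 * √(1 + lam ^ 2 * x ^ 2)) := by gcongr; linarith
    _ = √(1 + x ^ 2) * √(1 + lam ^ 2 * x ^ 2) ^ 2 * 2 := by ring
    _ = √(1 + x ^ 2) * (1 + lam ^ 2 * x ^ 2) * 2 := by rw [hb2]

theorem stmt3 : ∃ c : ℝ, 0 < c ∧ ∀ x lam : ℝ, 0 < x → 0 < lam → lam < 1 →
    c * (x / (Real.sqrt (1 + x ^ 2) * (1 + lam ^ 2 * x ^ 2)) * (1 - lam ^ 2)) ≤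
      |lam * x / Real.sqrt (1 + lam ^ 2 * x ^ 2) - x / Real.sqrt (1 + x ^ 2)| := by
  refine ⟨1 / 2, by norm_num, fun x lam hx hlam₀ hlam₁ => ?_⟩
  rw [abs_sub_comm, one_div_mul_eq_div]
  exact (div_sqrt_one_add_sq_sub_div_sqrt_one_add_sq_ge hx.le hlam₀.le hlam₁.le).trans
    (le_abs_self _)
end

section
/- There exists a constant $c > 0$ such that for all real $x > 0$ and $\lambda > 1$, $\left| \frac{\lambda x}{\sqrt{1+\lambda^2 x^2}} - \frac{x}{\sqrt{1+x^2}} \right| \geq c\, \frac{\lambda x}{\sqrt{1+\lambda^2 x^2}\,(1+x^2)}\,(1 - \lambda^{-2})$. -/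
/-!
Write `a = √(1 + x²)` and `b = √(1 + λ²x²)`. Rationalising,
`λx/b - x/a = x(λa - b)/(ab) = x(λ² - 1)/(ab(λa + b))`, and `b ≤ λa` for `λ ≥ 1`, so the
denominator is at most `2λa²b`. This gives the inequality with `c = 1/2`.
-/

open Real

lemma sqrt_one_add_sq_mul_sq_le {lam : ℝ} (hlam : 1 ≤ lam) (x : ℝ) :
    √(1 + lam ^ 2 * x ^ 2) ≤ lam * √(1 + x ^ 2) := by
  refine sqrt_le_iff.2 ⟨by positivity, ?_⟩
  rw [mul_pow, sq_sqrt (by positivity)]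
  nlinarith

lemma div_sqrt_one_add_sq_sub_div_sqrt {lam : ℝ} (hlam : 0 ≤ lam) (x : ℝ) :
    lam * x / √(1 + lam ^ 2 * x ^ 2) - x / √(1 + x ^ 2) =
      x * (lam ^ 2 - 1) /
        (√(1 + lam ^ 2 * x ^ 2) * √(1 + x ^ 2) * (lam * √(1 + x ^ 2) + √(1 + lam ^ 2 * x ^ 2))) := by
  have ha : 0 < √(1 + x ^ 2) := sqrt_pos.2 (by positivity)
  have hb : 0 < √(1 + lam ^ 2 * x ^ 2) := sqrt_pos.2 (by positivity)
  have ha2 : √(1 + x ^ 2) ^ 2 = 1 + x ^ 2 := sq_sqrt (by positivity)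
  have hb2 : √(1 + lam ^ 2 * x ^ 2) ^ 2 = 1 + lam ^ 2 * x ^ 2 := sq_sqrt (by positivity)
  field_simp
  linear_combination x * lam ^ 2 * ha2 - x * hb2

lemma half_mul_le_div_sqrt_sub_div_sqrt {x lam : ℝ} (hx : 0 ≤ x) (hlam : 1 ≤ lam) :
    1 / 2 * (lam * x / (√(1 + lam ^ 2 * x ^ 2) * (1 + x ^ 2)) * (1 - lam⁻¹ ^ 2)) ≤
      lam * x / √(1 + lam ^ 2 * x ^ 2) - x / √(1 + x ^ 2) := by
  have hlam0 : 0 < lam := by linarith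
  rw [div_sqrt_one_add_sq_sub_div_sqrt hlam0.le]
  set a := √(1 + x ^ 2)
  set b := √(1 + lam ^ 2 * x ^ 2)
  have ha : 0 < a := sqrt_pos.2 (by positivity)
  have hb : 0 < b := sqrt_pos.2 (by positivity)
  have ha2 : 1 + x ^ 2 = a ^ 2 := (sq_sqrt (by positivity)).symm
  calc 1 / 2 * (lam * x / (b * (1 + x ^ 2)) * (1 - lam⁻¹ ^ 2))
      = x * (lam ^ 2 - 1) / (b * a * (2 * lam * a)) := by rw [ha2]; field_simp
    _ ≤ x * (lam ^ 2 - 1) / (b * a * (lam * a + b)) := by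
      gcongr
      · exact mul_nonneg hx (by nlinarith)
      · linarith [sqrt_one_add_sq_mul_sq_le hlam x]

theorem stmt4 : ∃ c : ℝ, 0 < c ∧ ∀ x lam : ℝ, 0 < x → 1 < lam →
    c * (lam * x / (Real.sqrt (1 + lam ^ 2 * x ^ 2) * (1 + x ^ 2)) * (1 - lam⁻¹ ^ 2)) ≤
      |lam * x / Real.sqrt (1 + lam ^ 2 * x ^ 2) - x / Real.sqrt (1 + x ^ 2)| :=
  ⟨1 / 2, one_half_pos, fun _ _ hx hlam =>
    (half_mul_le_div_sqrt_sub_div_sqrt hx.le hlam.le).trans (le_abs_self _)⟩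
end

section
/- Let $M \geq 4$ and $\langle a \rangle_M = \sqrt{|a|^2+M^2}$, $\langle a \rangle = \sqrt{|a|^2+1}$. Fix $\rho \in \mathbb{R}^3$ and let $\nu_0 = \rho \frac{M}{M-1}$ (the unique point where $\nabla_\nu \phi_u(\rho, \cdot) = 0$ with $\phi_u(\rho,\nu) = \langle \rho \rangle - \langle \nu \rangle_M + \langle \rho - \nu \rangle$). Then there exists a universal constant $c > 0$ (independent of $M$ and $\rho$) such that for any $\eta \in \mathbb{R}^3$ with $\phi_u(\rho, \nu_0 + \eta) = 0$, one has $|\eta| \geq c\sqrt{M}$. In other words, $\mathrm{dist}(\{\nu : \phi_u(\rho,\nu) = 0\}, \{\nu_0\}) \geq c\sqrt{M}$. -/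
noncomputable def jb (a : EuclideanSpace ℝ (Fin 3)) (m : ℝ) : ℝ :=
  Real.sqrt (‖a‖ ^ 2 + m ^ 2)

noncomputable def phiU (M : ℝ) (ρ ν : EuclideanSpace ℝ (Fin 3)) : ℝ :=
  jb ρ 1 - jb ν M + jb (ρ - ν) 1

/-!
On the time resonant set, squaring `⟨ν⟩_M = ⟨ρ⟩ + ⟨ρ - ν⟩` gives
`M² - 2 = 2⟨ρ⟩⟨ρ - ν⟩ + 2 ρ·(ρ - ν)`. Bounding the product by the weighted AM-GM inequality
`2ab ≤ a²/t + t b²` with `t = M - 1` completes the right-hand side to the square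
`|ρ + (M - 1)(ρ - ν)|² / (M - 1) = (M - 1)|η|²`, where `ν = ν₀ + η`; this is exactly where the
choice `ν₀ = ρ M/(M - 1)` enters. Hence `(M - 1)|η|² ≥ M² - M - 1 - 1/(M - 1)`, so `|η|² ≳ M`.
-/

open RealInnerProductSpace

lemma jb_nonneg (a : EuclideanSpace ℝ (Fin 3)) (m : ℝ) : 0 ≤ jb a m :=
  Real.sqrt_nonneg _

lemma jb_sq (a : EuclideanSpace ℝ (Fin 3)) (m : ℝ) : jb a m ^ 2 = ‖a‖ ^ 2 + m ^ 2 :=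
  Real.sq_sqrt (by positivity)

lemma two_mul_le_div_add_mul (a b : ℝ) {t : ℝ} (ht : 0 < t) :
    2 * a * b ≤ a ^ 2 / t + t * b ^ 2 := by
  have key : 0 ≤ (a - t * b) ^ 2 / t := by positivity
  have expand : (a - t * b) ^ 2 / t = a ^ 2 / t + t * b ^ 2 - 2 * a * b := by
    field_simp
    ring
  linarith

lemma phiU_eq_zero_iff (M : ℝ) (ρ ν : EuclideanSpace ℝ (Fin 3)) :
    phiU M ρ ν = 0 ↔ M ^ 2 - 2 = 2 * jb ρ 1 * jb (ρ - ν) 1 + 2 * ⟪ρ, ρ - ν⟫ := by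
  have hν : ‖ν‖ ^ 2 = ‖ρ‖ ^ 2 - 2 * ⟪ρ, ρ - ν⟫ + ‖ρ - ν‖ ^ 2 := by
    rw [← norm_sub_sq_real, sub_sub_cancel]
  have hsum : 0 ≤ jb ρ 1 + jb (ρ - ν) 1 := add_nonneg (jb_nonneg _ _) (jb_nonneg _ _)
  calc phiU M ρ ν = 0 ↔ jb ν M ^ 2 = (jb ρ 1 + jb (ρ - ν) 1) ^ 2 := by
        rw [sq_eq_sq₀ (jb_nonneg _ _) hsum, phiU]
        constructor <;> intro h <;> linarith
    _ ↔ M ^ 2 - 2 = 2 * jb ρ 1 * jb (ρ - ν) 1 + 2 * ⟪ρ, ρ - ν⟫ := by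
        rw [add_sq, jb_sq, jb_sq, jb_sq, hν]
        constructor <;> intro h <;> linarith

lemma two_mul_jb_mul_jb_add_inner_le (x y : EuclideanSpace ℝ (Fin 3)) {t : ℝ} (ht : 0 < t) :
    2 * jb x 1 * jb y 1 + 2 * ⟪x, y⟫ ≤ ‖x + t • y‖ ^ 2 / t + t + 1 / t := by
  have hxy : ‖x + t • y‖ ^ 2 = ‖x‖ ^ 2 + 2 * t * ⟪x, y⟫ + t ^ 2 * ‖y‖ ^ 2 := by
    rw [norm_add_sq_real, inner_smul_right, norm_smul, Real.norm_of_nonneg ht.le]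
    ring
  have hrhs : ‖x + t • y‖ ^ 2 / t + t + 1 / t
      = jb x 1 ^ 2 / t + t * jb y 1 ^ 2 + 2 * ⟪x, y⟫ := by
    rw [hxy, jb_sq, jb_sq]
    field_simp
    ring
  linarith [two_mul_le_div_add_mul (jb x 1) (jb y 1) ht]

lemma sub_one_mul_sq_norm_ge_of_phiU_eq_zero {M : ℝ} (hM : 1 < M)
    {ρ η : EuclideanSpace ℝ (Fin 3)} (h : phiU M ρ ((M / (M - 1)) • ρ + η) = 0) :
    M ^ 2 - M - 1 - 1 / (M - 1) ≤ (M - 1) * ‖η‖ ^ 2 := by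
  have ht : 0 < M - 1 := by linarith
  have hcomplete : ρ + (M - 1) • (ρ - ((M / (M - 1)) • ρ + η)) = -((M - 1) • η) := by
    rw [smul_sub, smul_add, smul_smul, mul_div_cancel₀ _ ht.ne']
    module
  have hsq : ‖ρ + (M - 1) • (ρ - ((M / (M - 1)) • ρ + η))‖ ^ 2 / (M - 1)
      = (M - 1) * ‖η‖ ^ 2 := by
    rw [hcomplete, norm_neg, norm_smul, Real.norm_of_nonneg ht.le]
    field_simp
  have hle := two_mul_jb_mul_jb_add_inner_le ρ (ρ - ((M / (M - 1)) • ρ + η)) ht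
  rw [hsq, ← (phiU_eq_zero_iff M ρ _).mp h] at hle
  linarith

theorem stmt6 : ∃ c : ℝ, 0 < c ∧ ∀ (M : ℝ), 4 ≤ M →
    ∀ ρ η : EuclideanSpace ℝ (Fin 3),
    phiU M ρ ((M / (M - 1)) • ρ + η) = 0 →
    c * Real.sqrt M ≤ ‖η‖ := by
  refine ⟨1 / 2, by norm_num, fun M hM ρ η h => ?_⟩
  have hbound := sub_one_mul_sq_norm_ge_of_phiU_eq_zero (by linarith) h
  have hinv : 1 / (M - 1) ≤ 1 / 3 := one_div_le_one_div_of_le (by norm_num) (by linarith)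
  have hη : M / 4 ≤ ‖η‖ ^ 2 := by nlinarith
  have hsqrt : (1 / 2 * Real.sqrt M) ^ 2 = M / 4 := by
    rw [mul_pow, Real.sq_sqrt (by linarith)]
    ring
  exact (pow_le_pow_iff_left₀ (by positivity) (norm_nonneg η) two_ne_zero).mp (hsqrt ▸ hη)
end

section
/- Let $M \geq 1$, $\alpha > 1$, $\beta > 0$ with $\alpha > \beta$. Then there is a constant $C = C(\alpha, \beta)$, independent of $M$, such that for all $t \geq 2$, $\int_1^t \frac{ds}{s^\alpha \langle (t-s)/M \rangle^\beta} \leq C \langle t/M \rangle^{-\beta}$, where $\langle x \rangle = \sqrt{1+x^2}$. -/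
lemma aux_one_le_sqrt (x : ℝ) : 1 ≤ Real.sqrt (1 + x ^ 2) := by
  have h := Real.sqrt_le_sqrt (show (1:ℝ) ≤ 1 + x ^ 2 by nlinarith)
  simpa using h

lemma aux_double (x : ℝ) : Real.sqrt (1 + x ^ 2) ≤ 2 * Real.sqrt (1 + (x / 2) ^ 2) := by
  have h : (2:ℝ) * Real.sqrt (1 + (x / 2) ^ 2) = Real.sqrt (2 ^ 2 * (1 + (x / 2) ^ 2)) := by
    rw [Real.sqrt_mul (by positivity), Real.sqrt_sq (by norm_num)]
  rw [h]
  exact Real.sqrt_le_sqrt (by nlinarith)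

lemma aux_lower (x : ℝ) : (1 + x) / Real.sqrt 2 ≤ Real.sqrt (1 + x ^ 2) := by
  rw [div_le_iff₀ (by positivity), ← Real.sqrt_mul (by positivity)]
  exact Real.le_sqrt_of_sq_le (by nlinarith [sq_nonneg (1 - x)])

lemma aux_upper (y : ℝ) (hy : 1 ≤ y) : Real.sqrt (1 + y ^ 2) ≤ Real.sqrt 2 * y := by
  have h : Real.sqrt 2 * y = Real.sqrt (2 * y ^ 2) := by
    rw [Real.sqrt_mul (by norm_num), Real.sqrt_sq (by linarith)]
  rw [h]
  exact Real.sqrt_le_sqrt (by nlinarith)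

lemma aux_small (x : ℝ) (h0 : 0 ≤ x) (h1 : x ≤ 1) : Real.sqrt (1 + x ^ 2) ≤ Real.sqrt 2 :=
  Real.sqrt_le_sqrt (by nlinarith)

lemma aux_sqrt2_rpow (b : ℝ) : Real.sqrt 2 ^ b = (2:ℝ) ^ (b / 2) := by
  rw [Real.sqrt_eq_rpow, ← Real.rpow_mul (by norm_num : (0:ℝ) ≤ 2)]
  ring_nf

lemma aux_sqrt2_le_two : Real.sqrt 2 ≤ 2 := by
  have h := Real.sqrt_le_sqrt (show (2:ℝ) ≤ 2 ^ 2 by norm_num)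
  rwa [Real.sqrt_sq (by norm_num)] at h

set_option maxHeartbeats 2000000 in
theorem stmt9 (α β : ℝ) (hα : 1 < α) (hβ : 0 < β) (hβα : β < α) :
    ∃ C : ℝ, 0 < C ∧ ∀ M : ℝ, 1 ≤ M → ∀ t : ℝ, 2 ≤ t →
      (∫ s in (1:ℝ)..t, 1 / (s ^ α * Real.sqrt (1 + ((t - s) / M) ^ 2) ^ β)) ≤
        C * Real.sqrt (1 + (t / M) ^ 2) ^ (-β) := by
  set β' : ℝ := max (β + 1 - α) 0 with hβ'def
  have hβ'0 : 0 ≤ β' := le_max_right _ _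
  have hβ'1 : β' < 1 := max_lt (by linarith) one_pos
  have hβ'β : β' ≤ β := max_le (by linarith) hβ.le
  have hkey : β + 1 - α ≤ β' := le_max_left _ _
  have hα1 : (0:ℝ) < α - 1 := by linarith
  have h1β' : (0:ℝ) < 1 - β' := by linarith
  have h2pos : ∀ b : ℝ, (0:ℝ) < 2 ^ b := fun b => Real.rpow_pos_of_pos (by norm_num) b
  refine ⟨2 ^ β / (α - 1) + (2 ^ (β / 2) + 2 ^ (α + 1) * 2 ^ (β / 2) / (1 - β')), ?_, ?_⟩
  · have h1 := div_pos (h2pos β) hα1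
    have h2 := h2pos (β / 2)
    have h3 := div_pos (mul_pos (h2pos (α + 1)) (h2pos (β / 2))) h1β'
    linarith
  intro M hM t ht
  have hM0 : (0:ℝ) < M := by linarith
  have ht0 : (0:ℝ) < t := by linarith
  have ht2 : (1:ℝ) ≤ t / 2 := by linarith
  have ht20 : (0:ℝ) < t / 2 := by linarith
  have ht2t : t / 2 ≤ t := by linarith
  set g : ℝ → ℝ := fun s => 1 / (s ^ α * Real.sqrt (1 + ((t - s) / M) ^ 2) ^ β) with hg
  set J : ℝ := Real.sqrt (1 + (t / M) ^ 2) with hJdef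
  have hJ1 : 1 ≤ J := aux_one_le_sqrt _
  have hJ0 : 0 < J := lt_of_lt_of_le one_pos hJ1
  have hJb0 : 0 < J ^ β := Real.rpow_pos_of_pos hJ0 β
  have hJnb0 : 0 < J ^ (-β) := Real.rpow_pos_of_pos hJ0 (-β)
  -- continuity and integrability
  have hgc : ContinuousOn g (Set.Icc 1 t) := by
    apply ContinuousOn.div continuousOn_const
    · apply ContinuousOn.mul
      · exact ContinuousOn.rpow_const continuousOn_id
          (fun x hx => Or.inl (ne_of_gt (lt_of_lt_of_le one_pos hx.1)))
      · exact ContinuousOn.rpow_const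
          ((Real.continuous_sqrt.comp (by continuity)).continuousOn)
          (fun x _ => Or.inl (ne_of_gt (lt_of_lt_of_le one_pos (aux_one_le_sqrt _))))
    · intro x hx
      have h1 : (0:ℝ) < x := lt_of_lt_of_le one_pos hx.1
      have h2 : (0:ℝ) < Real.sqrt (1 + ((t - x) / M) ^ 2) :=
        lt_of_lt_of_le one_pos (aux_one_le_sqrt _)
      exact ne_of_gt (mul_pos (Real.rpow_pos_of_pos h1 α) (Real.rpow_pos_of_pos h2 β))
  have hint : ∀ a b : ℝ, 1 ≤ a → b ≤ t → a ≤ b →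
      IntervalIntegrable g MeasureTheory.volume a b := by
    intro a b ha hb hab
    apply ContinuousOn.intervalIntegrable
    apply hgc.mono
    rw [Set.uIcc_of_le hab]
    exact Set.Icc_subset_Icc ha hb
  have hsplit : (∫ s in (1:ℝ)..t, g s)
      = (∫ s in (1:ℝ)..(t/2), g s) + ∫ s in (t/2)..t, g s :=
    (intervalIntegral.integral_add_adjacent_intervals
      (hint 1 (t/2) le_rfl ht2t ht2) (hint (t/2) t ht2 le_rfl ht2t)).symm
  -- Part 1
  have hI1 : (∫ s in (1:ℝ)..(t/2), g s) ≤ 2 ^ β / (α - 1) * J ^ (-β) := by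
    have hpt1 : ∀ s ∈ Set.Icc (1:ℝ) (t/2), g s ≤ 2 ^ β * J ^ (-β) * s ^ (-α) := by
      intro s hs
      have hs1 : (1:ℝ) ≤ s := hs.1
      have hs0 : (0:ℝ) < s := by linarith
      set S : ℝ := Real.sqrt (1 + ((t - s) / M) ^ 2) with hSdef
      have hS1 : 1 ≤ S := aux_one_le_sqrt _
      have hS0 : 0 < S := by linarith
      have hle : t / M / 2 ≤ (t - s) / M := by
        have h2' : t / 2 ≤ t - s := by linarith [hs.2]
        calc t / M / 2 = (t / 2) * (1 / M) := by ring
          _ ≤ (t - s) * (1 / M) := mul_le_mul_of_nonneg_right h2' (by positivity)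
          _ = (t - s) / M := by ring
      have hJ2 : J ≤ 2 * S := by
        refine le_trans (aux_double (t / M)) ?_
        have h0 : (0:ℝ) ≤ t / M / 2 := by positivity
        have hsq : (t / M / 2) ^ 2 ≤ ((t - s) / M) ^ 2 := by nlinarith
        have := Real.sqrt_le_sqrt (show 1 + (t / M / 2) ^ 2 ≤ 1 + ((t - s) / M) ^ 2 by linarith)
        linarith
      have hJ2S : J / 2 ≤ S := by linarith
      have hrp : (J / 2) ^ β ≤ S ^ β := Real.rpow_le_rpow (by positivity) hJ2S hβ.le
      have h3 : g s ≤ 1 / (s ^ α * (J / 2) ^ β) := by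
        simp only [hg]
        apply one_div_le_one_div_of_le (by positivity)
        exact mul_le_mul_of_nonneg_left hrp (by positivity)
      refine h3.trans_eq ?_
      have e1 : (0:ℝ) < 2 ^ β := Real.rpow_pos_of_pos (by norm_num) β
      have e2 : (0:ℝ) < s ^ α := Real.rpow_pos_of_pos hs0 α
      rw [Real.div_rpow hJ0.le (by norm_num : (0:ℝ) ≤ 2), Real.rpow_neg hJ0.le,
        Real.rpow_neg hs0.le]
      field_simp
    have hrint : IntervalIntegrable (fun s : ℝ => 2 ^ β * J ^ (-β) * s ^ (-α))
        MeasureTheory.volume 1 (t/2) := by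
      apply IntervalIntegrable.const_mul
      apply ContinuousOn.intervalIntegrable
      apply ContinuousOn.rpow_const continuousOn_id
      intro x hx
      rw [Set.uIcc_of_le ht2] at hx
      exact Or.inl (ne_of_gt (lt_of_lt_of_le one_pos hx.1))
    have hval : (∫ s in (1:ℝ)..(t/2), s ^ (-α)) ≤ 1 / (α - 1) := by
      rw [integral_rpow (Or.inr ⟨ne_of_lt (by linarith : -α < -1), by
        rw [Set.uIcc_of_le ht2]; rintro ⟨h0, -⟩; linarith⟩)]
      rw [Real.one_rpow]
      have hnn : (0:ℝ) ≤ (t/2) ^ (-α + 1) := Real.rpow_nonneg ht20.le _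
      have heq : ((t/2) ^ (-α + 1) - 1) / (-α + 1) = (1 - (t/2) ^ (-α + 1)) / (α - 1) := by
        rw [div_eq_div_iff (by linarith : (-α:ℝ) + 1 ≠ 0) (by linarith : (α:ℝ) - 1 ≠ 0)]
        ring
      rw [heq]
      gcongr
      linarith
    calc (∫ s in (1:ℝ)..(t/2), g s)
        ≤ ∫ s in (1:ℝ)..(t/2), 2 ^ β * J ^ (-β) * s ^ (-α) :=
          intervalIntegral.integral_mono_on ht2 (hint 1 (t/2) le_rfl ht2t ht2) hrint hpt1
      _ = 2 ^ β * J ^ (-β) * ∫ s in (1:ℝ)..(t/2), s ^ (-α) := by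
          rw [← intervalIntegral.integral_const_mul]
      _ ≤ 2 ^ β * J ^ (-β) * (1 / (α - 1)) := by
          apply mul_le_mul_of_nonneg_left hval (by positivity)
      _ = 2 ^ β / (α - 1) * J ^ (-β) := by ring
  -- Part 2
  have hI2 : (∫ s in (t/2)..t, g s)
      ≤ (2 ^ (β / 2) + 2 ^ (α + 1) * 2 ^ (β / 2) / (1 - β')) * J ^ (-β) := by
    have hC2b : (0:ℝ) ≤ 2 ^ (α + 1) * 2 ^ (β / 2) / (1 - β') :=
      (div_pos (mul_pos (h2pos _) (h2pos _)) h1β').le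
    rcases le_total t M with htM | hMt
    · -- easy case : t ≤ M
      have hpt : ∀ s ∈ Set.Icc (t/2) t, g s ≤ (t/2) ^ (-α) := by
        intro s hs
        have hs0 : (0:ℝ) < s := lt_of_lt_of_le ht20 hs.1
        have hS1 : 1 ≤ Real.sqrt (1 + ((t - s)/M)^2) := aux_one_le_sqrt _
        have h1 : (t/2) ^ α ≤ s ^ α := Real.rpow_le_rpow ht20.le hs.1 (by linarith)
        have h2 : (1:ℝ) ≤ Real.sqrt (1 + ((t - s)/M)^2) ^ β := by
          have := Real.rpow_le_rpow (by norm_num : (0:ℝ) ≤ 1) hS1 hβ.le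
          rwa [Real.one_rpow] at this
        have h3 : g s ≤ 1 / ((t/2) ^ α) := by
          simp only [hg]
          apply one_div_le_one_div_of_le (by positivity)
          calc (t/2) ^ α = (t/2) ^ α * 1 := by ring
            _ ≤ s ^ α * Real.sqrt (1 + ((t - s)/M)^2) ^ β :=
              mul_le_mul h1 h2 (by norm_num) (Real.rpow_nonneg hs0.le _)
        rwa [one_div, ← Real.rpow_neg ht20.le] at h3
      have hmono := intervalIntegral.integral_mono_on ht2t (hint (t/2) t ht2 le_rfl ht2t)
          intervalIntegrable_const hpt
      rw [intervalIntegral.integral_const, smul_eq_mul] at hmono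
      have hb : (t - t/2) * (t/2) ^ (-α) ≤ 1 := by
        have e : (t - t/2) * (t/2) ^ (-α) = (t/2) ^ (1 + -α) := by
          rw [Real.rpow_add ht20, Real.rpow_one]; ring
        rw [e]; exact Real.rpow_le_one_of_one_le_of_nonpos ht2 (by linarith)
      have hJs : J ^ β ≤ 2 ^ (β/2) := by
        have h1 : J ≤ Real.sqrt 2 := aux_small _ (by positivity) (by rw [div_le_one hM0]; exact htM)
        calc J ^ β ≤ Real.sqrt 2 ^ β := Real.rpow_le_rpow hJ0.le h1 hβ.le
          _ = 2 ^ (β/2) := aux_sqrt2_rpow β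
      have hmul : J ^ β * J ^ (-β) = 1 := by
        rw [← Real.rpow_add hJ0]; simp
      have k1 : J ^ β * J ^ (-β) ≤ 2 ^ (β/2) * J ^ (-β) :=
        mul_le_mul_of_nonneg_right hJs hJnb0.le
      have k2 : (0:ℝ) ≤ 2 ^ (α + 1) * 2 ^ (β / 2) / (1 - β') * J ^ (-β) :=
        mul_nonneg hC2b hJnb0.le
      calc (∫ s in (t/2)..t, g s) ≤ (t - t/2) * (t/2) ^ (-α) := hmono
        _ ≤ 1 := hb
        _ = J ^ β * J ^ (-β) := hmul.symm
        _ ≤ 2 ^ (β/2) * J ^ (-β) := k1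
        _ ≤ (2 ^ (β / 2) + 2 ^ (α + 1) * 2 ^ (β / 2) / (1 - β')) * J ^ (-β) := by linarith
    · -- hard case : M ≤ t
      have htM1 : (1:ℝ) ≤ t / M := by rw [le_div_iff₀ hM0]; linarith
      have hsM0 : (0:ℝ) < Real.sqrt 2 * M := by positivity
      set K : ℝ := (t/2) ^ (-α) * (Real.sqrt 2 * M) ^ β' with hK
      have hK0 : (0:ℝ) < (t/2) ^ (-α) := Real.rpow_pos_of_pos ht20 _
      have hKpos : 0 < K := mul_pos hK0 (Real.rpow_pos_of_pos hsM0 β')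
      have hpt : ∀ s ∈ Set.Icc (t/2) t, g s ≤ K * (1 + (t - s)) ^ (-β') := by
        intro s hs
        have hs0 : (0:ℝ) < s := lt_of_lt_of_le ht20 hs.1
        have hv0 : (0:ℝ) ≤ t - s := by linarith [hs.2]
        have hv1 : (0:ℝ) < 1 + (t - s) := by linarith
        set S : ℝ := Real.sqrt (1 + ((t - s)/M)^2) with hSdef
        have hS1 : 1 ≤ S := aux_one_le_sqrt _
        have hS0 : 0 < S := by linarith
        have e1 : g s = (s ^ α)⁻¹ * (S ^ β)⁻¹ := by
          simp only [hg]; rw [one_div, mul_inv]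
        have b1 : (s ^ α)⁻¹ ≤ (t/2) ^ (-α) := by
          rw [Real.rpow_neg ht20.le]
          exact inv_anti₀ (Real.rpow_pos_of_pos ht20 α)
            (Real.rpow_le_rpow ht20.le hs.1 (by linarith))
        have b2 : (S ^ β)⁻¹ ≤ (Real.sqrt 2 * M) ^ β' * (1 + (t - s)) ^ (-β') := by
          have c1 : S ^ (-β) ≤ S ^ (-β') :=
            Real.rpow_le_rpow_of_exponent_le hS1 (by linarith)
          have c2 : (1 + (t - s)) / (Real.sqrt 2 * M) ≤ S := by
            have hs2 : (0:ℝ) < Real.sqrt 2 := by positivity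
            have d1 : (1 + (t - s)) / (Real.sqrt 2 * M) ≤ (1 + (t - s)/M) / Real.sqrt 2 := by
              rw [div_le_div_iff₀ (by positivity) hs2]
              have e2 : (1 + (t - s)/M) * (Real.sqrt 2 * M) = Real.sqrt 2 * (M + (t - s)) := by
                field_simp
              have e3 : (1 + (t - s)) * Real.sqrt 2 = Real.sqrt 2 * (1 + (t - s)) := by ring
              rw [e2, e3]
              have : (1:ℝ) + (t - s) ≤ M + (t - s) := by linarith
              exact mul_le_mul_of_nonneg_left this hs2.le
            exact d1.trans (aux_lower ((t - s)/M))
          have c3 : S ^ (-β') ≤ ((1 + (t - s)) / (Real.sqrt 2 * M)) ^ (-β') :=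
            Real.rpow_le_rpow_of_nonpos (by positivity) c2 (by linarith)
          have c4 : ((1 + (t - s)) / (Real.sqrt 2 * M)) ^ (-β')
              = (Real.sqrt 2 * M) ^ β' * (1 + (t - s)) ^ (-β') := by
            rw [Real.div_rpow hv1.le hsM0.le, Real.rpow_neg hsM0.le, div_eq_mul_inv,
              inv_inv, mul_comm]
          rw [← Real.rpow_neg hS0.le]
          exact (c1.trans c3).trans_eq c4
        rw [e1]
        calc (s ^ α)⁻¹ * (S ^ β)⁻¹
            ≤ (t/2) ^ (-α) * ((Real.sqrt 2 * M) ^ β' * (1 + (t - s)) ^ (-β')) :=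
              mul_le_mul b1 b2 (by positivity) hK0.le
          _ = K * (1 + (t - s)) ^ (-β') := by rw [hK]; ring
      have hrint : IntervalIntegrable (fun s => K * (1 + (t - s)) ^ (-β'))
          MeasureTheory.volume (t/2) t := by
        apply IntervalIntegrable.const_mul
        apply ContinuousOn.intervalIntegrable
        apply ContinuousOn.rpow_const
          ((continuous_const.add (continuous_const.sub continuous_id)).continuousOn)
        intro x hx
        rw [Set.uIcc_of_le ht2t] at hx
        exact Or.inl (ne_of_gt (by linarith [hx.2] : (0:ℝ) < 1 + (t - x)))
      have hIval : (∫ s in (t/2)..t, (1 + (t - s)) ^ (-β')) ≤ t ^ (1 - β') / (1 - β') := by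
        have e2 : (∫ s in (t/2)..t, (1 + (t - s)) ^ (-β'))
            = ∫ u in (0:ℝ)..(t/2), (1 + u) ^ (-β') := by
          have h := intervalIntegral.integral_comp_sub_left (a := t/2) (b := t)
            (fun v => (1 + v) ^ (-β')) t
          rw [show t - t = (0:ℝ) by ring, show t - t/2 = t/2 by ring] at h
          exact h
        have e3 : (∫ u in (0:ℝ)..(t/2), (1 + u) ^ (-β'))
            = ∫ v in (1:ℝ)..(1 + t/2), v ^ (-β') := by
          have h := intervalIntegral.integral_comp_add_left (a := (0:ℝ)) (b := t/2)
            (fun v => v ^ (-β')) 1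
          rw [show (1:ℝ) + 0 = 1 by ring] at h
          exact h
        rw [e2, e3, integral_rpow (Or.inl (by linarith : (-1:ℝ) < -β'))]
        rw [Real.one_rpow, show (-β' + 1 : ℝ) = 1 - β' by ring]
        have h1p : (0:ℝ) < 1 + t/2 := by linarith
        have hle2 : (1 + t/2) ^ (1 - β') ≤ t ^ (1 - β') :=
          Real.rpow_le_rpow h1p.le (by linarith) (by linarith)
        gcongr
        linarith
      have hJs : J ^ β ≤ 2 ^ (β/2) * (t ^ β * (M ^ β)⁻¹) := by
        have h1 : J ≤ Real.sqrt 2 * (t/M) := aux_upper _ htM1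
        calc J ^ β ≤ (Real.sqrt 2 * (t/M)) ^ β :=
              Real.rpow_le_rpow hJ0.le h1 hβ.le
          _ = 2 ^ (β/2) * (t ^ β * (M ^ β)⁻¹) := by
              rw [Real.mul_rpow (Real.sqrt_nonneg 2) (by positivity), aux_sqrt2_rpow,
                Real.div_rpow ht0.le hM0.le]
              ring
      have hsplit1 : (t/2:ℝ) ^ (-α) = 2 ^ α * t ^ (-α) := by
        rw [Real.div_rpow ht0.le (by norm_num : (0:ℝ) ≤ 2),
          Real.rpow_neg (show (0:ℝ) ≤ 2 by norm_num), div_eq_mul_inv, inv_inv]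
        ring
      have hsplit2 : (Real.sqrt 2 * M) ^ β' = Real.sqrt 2 ^ β' * M ^ β' :=
        Real.mul_rpow (Real.sqrt_nonneg 2) hM0.le
      have hT : t ^ (-α) * (t ^ (1 - β') * t ^ β) ≤ 1 := by
        rw [← Real.rpow_add ht0, ← Real.rpow_add ht0]
        exact Real.rpow_le_one_of_one_le_of_nonpos (by linarith) (by linarith)
      have hMm : M ^ β' * (M ^ β)⁻¹ ≤ 1 := by
        rw [← div_eq_mul_inv, div_le_one (Real.rpow_pos_of_pos hM0 β)]
        exact Real.rpow_le_rpow_of_exponent_le hM hβ'β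
      have hs2' : Real.sqrt 2 ^ β' ≤ 2 := by
        have h1 : (1:ℝ) ≤ Real.sqrt 2 := by
          have h2 := Real.sqrt_le_sqrt (show (1:ℝ) ≤ 2 by norm_num)
          simpa using h2
        calc Real.sqrt 2 ^ β' ≤ Real.sqrt 2 ^ (1:ℝ) :=
            Real.rpow_le_rpow_of_exponent_le h1 hβ'1.le
          _ = Real.sqrt 2 := Real.rpow_one _
          _ ≤ 2 := aux_sqrt2_le_two
      have hbr : Real.sqrt 2 ^ β' * (t ^ (-α) * (t ^ (1 - β') * t ^ β)) * (M ^ β' * (M ^ β)⁻¹)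
          ≤ 2 * 1 * 1 := by
        have n1 : (0:ℝ) ≤ t ^ (-α) * (t ^ (1 - β') * t ^ β) := by positivity
        have n2 : (0:ℝ) ≤ M ^ β' * (M ^ β)⁻¹ := by positivity
        exact mul_le_mul (mul_le_mul hs2' hT n1 (by norm_num)) hMm n2 (by norm_num)
      have hBnn : (0:ℝ) ≤ 2 ^ α * 2 ^ (β/2) / (1 - β') :=
        (div_pos (mul_pos (h2pos _) (h2pos _)) h1β').le
      have hQnn : (0:ℝ) ≤ t ^ (1 - β') / (1 - β') :=
        div_nonneg (Real.rpow_nonneg ht0.le _) h1β'.le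
      have heq : K * (t ^ (1 - β') / (1 - β')) * (2 ^ (β/2) * (t ^ β * (M ^ β)⁻¹))
          = (2 ^ α * 2 ^ (β/2) / (1 - β'))
            * (Real.sqrt 2 ^ β' * (t ^ (-α) * (t ^ (1 - β') * t ^ β)) * (M ^ β' * (M ^ β)⁻¹)) := by
        rw [hK, hsplit1, hsplit2]; ring
      have hgoal : K * (t ^ (1 - β') / (1 - β')) * J ^ β
          ≤ 2 ^ (α + 1) * 2 ^ (β / 2) / (1 - β') := by
        calc K * (t ^ (1 - β') / (1 - β')) * J ^ β
            ≤ K * (t ^ (1 - β') / (1 - β')) * (2 ^ (β/2) * (t ^ β * (M ^ β)⁻¹)) :=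
              mul_le_mul_of_nonneg_left hJs (mul_nonneg hKpos.le hQnn)
          _ = (2 ^ α * 2 ^ (β/2) / (1 - β'))
              * (Real.sqrt 2 ^ β' * (t ^ (-α) * (t ^ (1 - β') * t ^ β)) * (M ^ β' * (M ^ β)⁻¹)) := heq
          _ ≤ (2 ^ α * 2 ^ (β/2) / (1 - β')) * (2 * 1 * 1) :=
              mul_le_mul_of_nonneg_left hbr hBnn
          _ = 2 ^ (α + 1) * 2 ^ (β / 2) / (1 - β') := by
              rw [Real.rpow_add (by norm_num : (0:ℝ) < 2), Real.rpow_one]; ring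
      have hmulJ : J ^ β * J ^ (-β) = 1 := by
        rw [← Real.rpow_add hJ0]; simp
      have hfinal : K * (t ^ (1 - β') / (1 - β'))
          ≤ 2 ^ (α + 1) * 2 ^ (β / 2) / (1 - β') * J ^ (-β) := by
        calc K * (t ^ (1 - β') / (1 - β'))
            = K * (t ^ (1 - β') / (1 - β')) * (J ^ β * J ^ (-β)) := by rw [hmulJ]; ring
          _ = K * (t ^ (1 - β') / (1 - β')) * J ^ β * J ^ (-β) := by ring
          _ ≤ 2 ^ (α + 1) * 2 ^ (β / 2) / (1 - β') * J ^ (-β) :=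
              mul_le_mul_of_nonneg_right hgoal hJnb0.le
      calc (∫ s in (t/2)..t, g s)
          ≤ ∫ s in (t/2)..t, K * (1 + (t - s)) ^ (-β') :=
            intervalIntegral.integral_mono_on ht2t (hint (t/2) t ht2 le_rfl ht2t) hrint hpt
        _ = K * ∫ s in (t/2)..t, (1 + (t - s)) ^ (-β') :=
            intervalIntegral.integral_const_mul _ _
        _ ≤ K * (t ^ (1 - β') / (1 - β')) := mul_le_mul_of_nonneg_left hIval hKpos.le
        _ ≤ 2 ^ (α + 1) * 2 ^ (β / 2) / (1 - β') * J ^ (-β) := hfinal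
        _ ≤ (2 ^ (β / 2) + 2 ^ (α + 1) * 2 ^ (β / 2) / (1 - β')) * J ^ (-β) := by
            have hk : (0:ℝ) ≤ 2 ^ (β/2) * J ^ (-β) := mul_nonneg (h2pos _).le hJnb0.le
            linarith
  calc (∫ s in (1:ℝ)..t, g s)
      = (∫ s in (1:ℝ)..(t/2), g s) + ∫ s in (t/2)..t, g s := hsplit
    _ ≤ 2 ^ β / (α - 1) * J ^ (-β)
        + (2 ^ (β / 2) + 2 ^ (α + 1) * 2 ^ (β / 2) / (1 - β')) * J ^ (-β) :=
        add_le_add hI1 hI2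
    _ = (2 ^ β / (α - 1) + (2 ^ (β / 2) + 2 ^ (α + 1) * 2 ^ (β / 2) / (1 - β'))) * J ^ (-β) := by
        ring
end
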